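/- Let A be a smooth and structured-decomposable probabilistic circuit over variables X respecting a vtree V, and let A_aug be its augmented PC over X ∪ Z, where Z = {Z_v : v an inner node of V}. Then for every assignment x of X, p_A(x) = Σ_z p_{A_aug}(x, z), where the sum ranges over all joint assignments z of the latent variables Z. -/

import Mathlib

open scoped BigOperators

/-! ### Probabilistic circuits

A probabilistic circuit is a rooted DAG of leaf, sum and product nodes.  We represent the
DAG by a finite sequence of nodes; well-formedness (`PC.WF`) requires that the children of
every node have strictly smaller index, and the root is the node of largest index. -/

inductive PCNode (ι : Type) (Val : ι → Type) (N : ℕ) where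
  | leaf (v : ι) (f : Val v → ℝ)
  | sum (ch : List (Fin N × ℝ))
  | prod (ch : List (Fin N))

namespace PCNode

variable {ι : Type} {Val : ι → Type} {N : ℕ}

def children : PCNode ι Val N → List (Fin N)
  | .leaf _ _ => []
  | .sum ch => ch.map Prod.fst
  | .prod ch => ch

def childCount : PCNode ι Val N → ℕ
  | .leaf _ _ => 0
  | .sum ch => ch.length
  | .prod ch => ch.length

def isProdB : PCNode ι Val N → Bool
  | .prod _ => true
  | _ => false

end PCNode

structure PC (ι : Type) (Val : ι → Type) where
  numNodes : ℕ
  node : Fin numNodes → PCNode ι Val numNodes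

namespace PC

variable {ι : Type} {Val : ι → Type}

/-- Acyclicity: every edge goes from a larger to a strictly smaller index. -/
def WF (C : PC ι Val) : Prop :=
  ∀ i : Fin C.numNodes, ∀ j ∈ (C.node i).children, (j : ℕ) < (i : ℕ)

/-- Fuelled evaluation of a node; for a well-formed circuit, fuel `C.numNodes` always
suffices. -/
def evalFuel (C : PC ι Val) (x : ∀ i, Val i) : ℕ → Fin C.numNodes → ℝ
  | 0, _ => 0
  | k+1, i =>
    match C.node i with
    | .leaf v f => f (x v)
    | .sum ch => (ch.map fun p => p.2 * evalFuel C x k p.1).sum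
    | .prod ch => (ch.map fun j => evalFuel C x k j).prod

def nodeEval (C : PC ι Val) (x : ∀ i, Val i) (i : Fin C.numNodes) : ℝ :=
  evalFuel C x C.numNodes i

/-- The function computed by the circuit (the value of its root node). -/
def eval (C : PC ι Val) (x : ∀ i, Val i) : ℝ :=
  if h : 0 < C.numNodes then nodeEval C x ⟨C.numNodes - 1, by omega⟩ else 0

def scopeFuel [DecidableEq ι] (C : PC ι Val) : ℕ → Fin C.numNodes → Finset ι
  | 0, _ => ∅
  | k+1, i =>
    match C.node i with
    | .leaf v _ => {v}
    | .sum ch => (ch.map fun p => scopeFuel C k p.1).foldr (· ∪ ·) ∅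
    | .prod ch => (ch.map fun j => scopeFuel C k j).foldr (· ∪ ·) ∅

/-- The scope of a node: the set of variables its subcircuit depends on. -/
def scope [DecidableEq ι] (C : PC ι Val) (i : Fin C.numNodes) : Finset ι :=
  scopeFuel C C.numNodes i

def rootScope [DecidableEq ι] (C : PC ι Val) : Finset ι :=
  if h : 0 < C.numNodes then scope C ⟨C.numNodes - 1, by omega⟩ else ∅

/-- The size of a circuit: its number of edges. -/
def numEdges (C : PC ι Val) : ℕ :=
  ∑ i : Fin C.numNodes, (C.node i).childCount

def depthFuel (C : PC ι Val) : ℕ → Fin C.numNodes → ℕ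
  | 0, _ => 0
  | k+1, i =>
    match C.node i with
    | .leaf _ _ => 0
    | .sum ch => (ch.map fun p => depthFuel C k p.1 + 1).foldr max 0
    | .prod ch => (ch.map fun j => depthFuel C k j + 1).foldr max 0

/-- The depth of a circuit: the length of the longest root-to-leaf path. -/
def depth (C : PC ι Val) : ℕ :=
  if h : 0 < C.numNodes then depthFuel C C.numNodes ⟨C.numNodes - 1, by omega⟩ else 0

/-- All children of any sum node have the same scope. -/
def Smooth [DecidableEq ι] (C : PC ι Val) : Prop :=
  ∀ (i : Fin C.numNodes) (ch : List (Fin C.numNodes × ℝ)), C.node i = .sum ch →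
    ∀ p ∈ ch, ∀ q ∈ ch, scope C p.1 = scope C q.1

/-- The children of any product node have pairwise disjoint scopes. -/
def Decomposable [DecidableEq ι] (C : PC ι Val) : Prop :=
  ∀ (i : Fin C.numNodes) (ch : List (Fin C.numNodes)), C.node i = .prod ch →
    ch.Pairwise fun a b => Disjoint (scope C a) (scope C b)

/-- Sum-node weights and leaf functions are nonnegative. -/
def NonnegWeights (C : PC ι Val) : Prop :=
  (∀ (i : Fin C.numNodes) (ch : List (Fin C.numNodes × ℝ)), C.node i = .sum ch →
      ∀ p ∈ ch, 0 ≤ p.2) ∧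
  (∀ (i : Fin C.numNodes) (v : ι) (f : Val v → ℝ), C.node i = .leaf v f → ∀ a, 0 ≤ f a)

/-- The weights of every sum node sum to one. -/
def NormalizedSums (C : PC ι Val) : Prop :=
  ∀ (i : Fin C.numNodes) (ch : List (Fin C.numNodes × ℝ)), C.node i = .sum ch →
    (ch.map Prod.snd).sum = 1

/-- Every leaf computes a probability distribution over its variable. -/
def NormalizedLeaves [∀ i, Fintype (Val i)] (C : PC ι Val) : Prop :=
  ∀ (i : Fin C.numNodes) (v : ι) (f : Val v → ℝ), C.node i = .leaf v f → ∑ a, f a = 1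

/-- Sum/leaf and product nodes alternate: children of sums are products and children of
products are sums or leaves. -/
def Alternating (C : PC ι Val) : Prop :=
  (∀ (i : Fin C.numNodes) (ch : List (Fin C.numNodes × ℝ)), C.node i = .sum ch →
      ∀ p ∈ ch, (C.node p.1).isProdB = true) ∧
  (∀ (i : Fin C.numNodes) (ch : List (Fin C.numNodes)), C.node i = .prod ch →
      ∀ j ∈ ch, (C.node j).isProdB = false)

/-- For every input, at most one child of each sum node evaluates to a nonzero value. -/
def Deterministic (C : PC ι Val) : Prop :=
  ∀ (x : ∀ i, Val i) (i : Fin C.numNodes) (ch : List (Fin C.numNodes × ℝ)),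
    C.node i = .sum ch → ∀ p ∈ ch, ∀ q ∈ ch,
      nodeEval C x p.1 ≠ 0 → nodeEval C x q.1 ≠ 0 → p.1 = q.1

/-- The number of product nodes with a given scope. -/
def prodCount [DecidableEq ι] (C : PC ι Val) (S : Finset ι) : ℕ :=
  (Finset.univ.filter fun i : Fin C.numNodes =>
    (C.node i).isProdB = true ∧ scope C i = S).card

/-- The index of a product node within the product nodes sharing its scope. -/
def idxOf [DecidableEq ι] (C : PC ι Val) (i : Fin C.numNodes) : ℕ :=
  (Finset.univ.filter fun j : Fin C.numNodes =>
    (j : ℕ) < (i : ℕ) ∧ (C.node j).isProdB = true ∧ scope C j = scope C i).card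

/-- Bundle of basic "probabilistic circuit over all the variables" conditions:
well-formed DAG, nonnegative normalized weights, normalized leaves, alternation of
sum/leaf and product nodes, and the root depending on all variables. -/
def IsPCOver [DecidableEq ι] [Fintype ι] [∀ i, Fintype (Val i)] (C : PC ι Val) : Prop :=
  C.WF ∧ C.NonnegWeights ∧ C.NormalizedSums ∧ C.NormalizedLeaves ∧ C.Alternating ∧
    C.rootScope = Finset.univ

end PC

/-! ### Vtrees -/

inductive Vtree (ι : Type) where
  | leaf (x : ι)
  | node (l r : Vtree ι)
deriving DecidableEq

namespace Vtree

variable {ι : Type}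

def varsFinset [DecidableEq ι] : Vtree ι → Finset ι
  | .leaf x => {x}
  | .node l r => varsFinset l ∪ varsFinset r

def leavesList : Vtree ι → List ι
  | .leaf x => [x]
  | .node l r => leavesList l ++ leavesList r

/-- A vtree over a set `S` of variables: its leaves are in bijection with `S`. -/
def ValidOver (T : Vtree ι) (S : Set ι) : Prop :=
  T.leavesList.Nodup ∧ ∀ x : ι, x ∈ T.leavesList ↔ x ∈ S

def numNodesV : Vtree ι → ℕ
  | .leaf _ => 1
  | .node l r => numNodesV l + numNodesV r + 1

def IsChildOf (c p : Vtree ι) : Prop :=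
  match p with
  | .leaf _ => False
  | .node l r => c = l ∨ c = r

inductive IsSubtreeOf : Vtree ι → Vtree ι → Prop
  | refl (t : Vtree ι) : IsSubtreeOf t t
  | left {s l r : Vtree ι} : IsSubtreeOf s l → IsSubtreeOf s (.node l r)
  | right {s l r : Vtree ι} : IsSubtreeOf s r → IsSubtreeOf s (.node l r)

def subtreesList : Vtree ι → List (Vtree ι)
  | .leaf x => [.leaf x]
  | .node l r => .node l r :: (subtreesList l ++ subtreesList r)

def isNodeB : Vtree ι → Bool
  | .leaf _ => false
  | .node _ _ => true

/-- The inner (non-leaf) nodes of a vtree. -/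
def innerFinset [DecidableEq ι] (V : Vtree ι) : Finset (Vtree ι) :=
  (V.subtreesList.filter fun t => t.isNodeB).toFinset

def depthV : Vtree ι → ℕ
  | .leaf _ => 0
  | .node l r => max (depthV l) (depthV r) + 1

/-- The nodes of a vtree occurring at a given depth. -/
def atDepth : Vtree ι → ℕ → Set (Vtree ι)
  | t, 0 => {t}
  | .leaf _, _+1 => ∅
  | .node l r, k+1 => atDepth l k ∪ atDepth r k

theorem numNodesV_lt_of_isChildOf {c p : Vtree ι} (h : c.IsChildOf p) :
    c.numNodesV < p.numNodesV := by
  cases p with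
  | leaf x => exact h.elim
  | node l r =>
    rcases h with h | h <;> subst h <;> simp only [numNodesV] <;> omega

end Vtree

/-- The tree `V_{v → Z_v}`, viewed as a graph: vertices are the subtrees of `V`
(inner subtrees play the role of the latent variables `Z_v`, leaves the role of the
variables `X`), with edges between each node and its children. -/
def vtreeGraph {ι : Type} (V : Vtree ι) : SimpleGraph (Vtree ι) where
  Adj s t := (s.IsChildOf t ∨ t.IsChildOf s) ∧ s.IsSubtreeOf V ∧ t.IsSubtreeOf V
  symm := by
    constructor
    rintro s t ⟨h, hs, ht⟩
    exact ⟨h.symm, ht, hs⟩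
  loopless := by
    constructor
    rintro s ⟨h, -, -⟩
    rcases h with h | h <;>
      exact absurd (Vtree.numNodesV_lt_of_isChildOf h) (lt_irrefl _)

namespace PC

variable {ι : Type} {Val : ι → Type}

/-- Structured decomposability with respect to a vtree: every product node has exactly
two children, whose scopes are the variables of the two children of an inner node of the
vtree. -/
def StructuredBy [DecidableEq ι] (C : PC ι Val) (V : Vtree ι) : Prop :=
  ∀ (i : Fin C.numNodes) (ch : List (Fin C.numNodes)), C.node i = .prod ch →
    ∃ (c₁ c₂ : Fin C.numNodes) (l r : Vtree ι), ch = [c₁, c₂] ∧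
      (Vtree.node l r).IsSubtreeOf V ∧
      scope C c₁ = l.varsFinset ∧ scope C c₂ = r.varsFinset

/-- Generalized structured decomposability (for products with arbitrarily many children):
every product node decomposes the variables of some vtree node into the variables of a
family of its subtrees. -/
def StructuredByGen [DecidableEq ι] (C : PC ι Val) (V : Vtree ι) : Prop :=
  ∀ (i : Fin C.numNodes) (ch : List (Fin C.numNodes)), C.node i = .prod ch →
    ∃ u : Vtree ι, u.IsSubtreeOf V ∧
      (∀ j ∈ ch, ∃ s : Vtree ι, s.IsSubtreeOf u ∧ scope C j = s.varsFinset) ∧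
      (ch.map fun j => scope C j).foldr (· ∪ ·) ∅ = u.varsFinset

/-- The hidden state size: the maximum number of product nodes sharing the scope of an
inner vtree node. -/
def hiddenStateSize [DecidableEq ι] (C : PC ι Val) (V : Vtree ι) : ℕ :=
  V.innerFinset.sup fun t => prodCount C t.varsFinset

end PC

/-! ### Contiguity and linear vtrees (for variables `Fin n`) -/

def IsIntervalFin {n : ℕ} (S : Finset (Fin n)) : Prop :=
  ∃ a b : ℕ, ∀ i : Fin n, i ∈ S ↔ (a ≤ (i : ℕ) ∧ (i : ℕ) ≤ b)

def PC.ContiguousPC {n : ℕ} {Val : Fin n → Type} (C : PC (Fin n) Val) : Prop :=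
  ∀ i : Fin C.numNodes, IsIntervalFin (PC.scope C i)

def Vtree.ContiguousV {n : ℕ} (V : Vtree (Fin n)) : Prop :=
  ∀ t : Vtree (Fin n), t.IsSubtreeOf V → IsIntervalFin t.varsFinset

inductive Vtree.IsLinearFrom {n : ℕ} : ℕ → Vtree (Fin n) → Prop
  | single (a : ℕ) (ha : a < n) (h : a + 1 = n) : IsLinearFrom a (.leaf ⟨a, ha⟩)
  | cons (a : ℕ) (ha : a < n) (T : Vtree (Fin n)) (h : a + 1 < n) :
      IsLinearFrom (a+1) T → IsLinearFrom a (.node (.leaf ⟨a, ha⟩) T)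

/-- The (right-)linear vtree, splitting `{Xᵢ}` from `{Xᵢ₊₁, …, Xₙ}` at each level. -/
def Vtree.IsLinear {n : ℕ} (V : Vtree (Fin n)) : Prop := Vtree.IsLinearFrom 0 V

/-! ### Blocking, covers and vtree labellings -/

/-- `C` blocks all paths between `A` and `B` in the graph `G`. -/
def SimpleGraph.BlocksSets {α : Type} (G : SimpleGraph α) (C A B : Set α) : Prop :=
  ∀ ⦃a b : α⦄, a ∈ A → b ∈ B → ∀ p : G.Walk a b, ∃ c ∈ C, c ∈ p.support

/-- A valid labelling of a target vtree `W` with respect to a (tree-shaped) graph `G`,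
where the variable `i` is represented by the vertex `xv i` and `X` is the set of all
variables.  The root is labelled `∅`, each leaf is labelled by the parent (i.e. the
neighbours) of its variable, the label of every inner node covers its variables, and the
labels of the children block their variables from the other labels. -/
structure IsValidLabelling {α ι : Type} [DecidableEq ι] (G : SimpleGraph α) (xv : ι → α)
    (X : Set ι) (W : Vtree ι) (label : Vtree ι → Set α) : Prop where
  root_empty : label W = ∅
  leaf_parent : ∀ x : ι, (Vtree.leaf x).IsSubtreeOf W →
    label (.leaf x) = {p | G.Adj (xv x) p}
  covers : ∀ l r : Vtree ι, (Vtree.node l r).IsSubtreeOf W →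
    G.BlocksSets (label (.node l r))
      (xv '' ((Vtree.node l r).varsFinset : Set ι))
      (xv '' (X \ ((Vtree.node l r).varsFinset : Set ι)))
  blocks_left : ∀ l r : Vtree ι, (Vtree.node l r).IsSubtreeOf W →
    G.BlocksSets (label l) (xv '' (l.varsFinset : Set ι)) (label r ∪ label (.node l r))
  blocks_right : ∀ l r : Vtree ι, (Vtree.node l r).IsSubtreeOf W →
    G.BlocksSets (label r) (xv '' (r.varsFinset : Set ι)) (label l ∪ label (.node l r))

/-! ### The augmented circuit -/

/-- Value types for the augmented circuit: the original variables keep their values, and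
each latent variable `Z_v` (indexed by the vtree node `v`) takes natural number values. -/
@[reducible] def augVal {ι : Type} (Val : ι → Type) : ι ⊕ Vtree ι → Type
  | .inl i => Val i
  | .inr _ => ℕ

/-- Find the subtree of a vtree with the given variable set (if any). -/
def Vtree.findByVars {ι : Type} [DecidableEq ι] : Vtree ι → Finset ι → Option (Vtree ι)
  | .leaf x, S => if S = {x} then some (.leaf x) else none
  | .node l r, S =>
      if S = (Vtree.node l r).varsFinset then some (.node l r)
      else (findByVars l S).orElse fun _ => findByVars r S

/-- The augmented circuit `A_aug` of a structured circuit: each product node `t` with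
scope `X_v` gets an additional leaf child over the latent variable `Z_v`, computing the
indicator function `1[Z_v = idx(t)]`.  (Node `2*i+1` is a copy of node `i` of the original
circuit and node `2*i` is the extra indicator leaf attached to it when `i` is a product.) -/
def PC.augment {ι : Type} {Val : ι → Type} [DecidableEq ι] (C : PC ι Val) (V : Vtree ι) :
    PC (ι ⊕ Vtree ι) (augVal Val) where
  numNodes := 2 * C.numNodes
  node := fun k =>
    if hk : (k : ℕ) % 2 = 1 then
      match C.node ⟨(k : ℕ) / 2, by have := k.isLt; omega⟩ with
      | .leaf v f => .leaf (Sum.inl v) f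
      | .sum ch => .sum (ch.map fun p =>
          ((⟨2 * (p.1 : ℕ) + 1, by have := p.1.isLt; omega⟩ : Fin (2 * C.numNodes)), p.2))
      | .prod ch => .prod ((ch.map fun (j : Fin C.numNodes) =>
          (⟨2 * (j : ℕ) + 1, by have := j.isLt; omega⟩ : Fin (2 * C.numNodes))) ++
          [⟨2 * ((k : ℕ) / 2), by have := k.isLt; omega⟩])
    else
      match C.node ⟨(k : ℕ) / 2, by have := k.isLt; omega⟩ with
      | .prod _ => .leaf
          (Sum.inr ((V.findByVars (PC.scope C ⟨(k : ℕ) / 2, by have := k.isLt; omega⟩)).getD V))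
          (fun m => if m = PC.idxOf C ⟨(k : ℕ) / 2, by have := k.isLt; omega⟩ then 1 else 0)
      | _ => .leaf (Sum.inr V) (fun _ => 1)

/-- Combine an assignment of the observed variables with an assignment of the latent
variables into an assignment for the augmented circuit. -/
def augAssign {ι : Type} {Val : ι → Type} [DecidableEq ι] (V : Vtree ι) (x : ∀ i, Val i)
    (z : ∀ t ∈ V.innerFinset, ℕ) : ∀ s : ι ⊕ Vtree ι, augVal Val s :=
  fun s => match s with
  | .inl i => x i
  | .inr t => if ht : t ∈ V.innerFinset then z t ht else 0

/-- The vtree of the augmented circuit: a new leaf for `Z_v` is attached at each inner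
node `v`. -/
def Vtree.augTree {ι : Type} : Vtree ι → Vtree (ι ⊕ Vtree ι)
  | .leaf x => .leaf (.inl x)
  | .node l r => .node (.leaf (.inr (.node l r))) (.node (augTree l) (augTree r))

/-!
Strengthen the claim to every node `i` whose scope is `X_u` for a vtree node `u`: summing the
copy of `i` in `A_aug` over the latent variables `Z_t`, `t` an inner vtree node below `u`,
gives `p_i(x)`; the root, with `u = V`, is the theorem. Induct over the nodes. At a sum node
this is linearity, smoothness giving all children the same `u`. At a product node `i` with
`u = (l, r)` the latent variables split into `Z_u`, those below `l` and those below `r`. The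
copy of the left child reads only latent variables below `l` and that of the right child only
those below `r`, so the sum over them factors into `p_{c₁}(x) p_{c₂}(x)`, and the indicator
leaf `1[Z_u = idx(i)]` retains exactly one value of `Z_u`.
-/
theorem Fin.fuel_eq_step {N : ℕ} {β : Type*} (F : ℕ → Fin N → β)
    (Φ : Fin N → (Fin N → β) → β) (hF : ∀ k i, F (k + 1) i = Φ i (F k))
    (hΦ : ∀ i g g', (∀ j < i, g j = g' j) → Φ i g = Φ i g') (i : Fin N) :
    F N i = Φ i (F N) := by
  have stable : ∀ (i : Fin N) (k : ℕ), (i : ℕ) < k → F k i = F N i := by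
    intro i
    induction i using WellFoundedLT.induction with
    | _ i IH =>
      intro k hk
      obtain ⟨a, rfl⟩ : ∃ a, k = a + 1 := ⟨k - 1, by omega⟩
      obtain ⟨b, hb⟩ : ∃ b, N = b + 1 := ⟨N - 1, by omega⟩
      rw [hb, hF, hF]
      refine hΦ i _ _ fun j hj => ?_
      have hj' : (j : ℕ) < i := hj
      rw [IH j hj a (by omega), IH j hj b (by omega), hb]
  rw [← stable i ((i : ℕ) + 1) (by omega), hF]
  exact hΦ i _ _ fun j hj => stable j i hj

namespace PC

variable {ι : Type} {Val : ι → Type} {C : PC ι Val}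

theorem WF.sum_child_lt (hwf : C.WF) {i : Fin C.numNodes} {ch : List (Fin C.numNodes × ℝ)}
    (h : C.node i = .sum ch) {p : Fin C.numNodes × ℝ} (hp : p ∈ ch) : p.1 < i :=
  hwf i p.1 (by rw [h]; exact List.mem_map_of_mem hp)

theorem WF.prod_child_lt (hwf : C.WF) {i : Fin C.numNodes} {ch : List (Fin C.numNodes)}
    (h : C.node i = .prod ch) {j : Fin C.numNodes} (hj : j ∈ ch) : j < i :=
  hwf i j (by rw [h]; exact hj)

def evalStep (C : PC ι Val) (x : ∀ i, Val i) (i : Fin C.numNodes) (g : Fin C.numNodes → ℝ) :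
    ℝ :=
  match C.node i with
  | .leaf v f => f (x v)
  | .sum ch => (ch.map fun p => p.2 * g p.1).sum
  | .prod ch => (ch.map g).prod

theorem nodeEval_eq_evalStep (hwf : C.WF) (x : ∀ i, Val i) (i : Fin C.numNodes) :
    C.nodeEval x i = C.evalStep x i (C.nodeEval x) := by
  refine Fin.fuel_eq_step (C.evalFuel x) (C.evalStep x) (fun _ _ => rfl) ?_ i
  intro i g g' hg
  unfold evalStep
  split
  · rfl
  · next ch h =>
    exact congrArg List.sum (List.map_congr_left fun p hp => by rw [hg _ (hwf.sum_child_lt h hp)])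
  · next ch h =>
    exact congrArg List.prod (List.map_congr_left fun j hj => hg _ (hwf.prod_child_lt h hj))

theorem nodeEval_leaf (hwf : C.WF) (x : ∀ i, Val i) {i : Fin C.numNodes} {v : ι}
    {f : Val v → ℝ} (h : C.node i = .leaf v f) : C.nodeEval x i = f (x v) := by
  rw [nodeEval_eq_evalStep hwf, evalStep, h]

theorem nodeEval_sum (hwf : C.WF) (x : ∀ i, Val i) {i : Fin C.numNodes}
    {ch : List (Fin C.numNodes × ℝ)} (h : C.node i = .sum ch) :
    C.nodeEval x i = (ch.map fun p => p.2 * C.nodeEval x p.1).sum := by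
  rw [nodeEval_eq_evalStep hwf, evalStep, h]

theorem nodeEval_prod (hwf : C.WF) (x : ∀ i, Val i) {i : Fin C.numNodes}
    {ch : List (Fin C.numNodes)} (h : C.node i = .prod ch) :
    C.nodeEval x i = (ch.map (C.nodeEval x)).prod := by
  rw [nodeEval_eq_evalStep hwf, evalStep, h]

variable [DecidableEq ι]

def scopeStep (C : PC ι Val) (i : Fin C.numNodes) (g : Fin C.numNodes → Finset ι) :
    Finset ι :=
  match C.node i with
  | .leaf v _ => {v}
  | .sum ch => (ch.map fun p => g p.1).foldr (· ∪ ·) ∅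
  | .prod ch => (ch.map g).foldr (· ∪ ·) ∅

theorem scope_eq_scopeStep (hwf : C.WF) (i : Fin C.numNodes) :
    C.scope i = C.scopeStep i C.scope := by
  refine Fin.fuel_eq_step C.scopeFuel C.scopeStep (fun _ _ => rfl) ?_ i
  intro i g g' hg
  unfold scopeStep
  split
  · rfl
  · next ch h =>
    exact congrArg _ (List.map_congr_left fun p hp => hg _ (hwf.sum_child_lt h hp))
  · next ch h =>
    exact congrArg _ (List.map_congr_left fun j hj => hg _ (hwf.prod_child_lt h hj))

theorem scope_leaf (hwf : C.WF) {i : Fin C.numNodes} {v : ι} {f : Val v → ℝ}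
    (h : C.node i = .leaf v f) : C.scope i = {v} := by
  rw [scope_eq_scopeStep hwf, scopeStep, h]

theorem scope_sum (hwf : C.WF) {i : Fin C.numNodes} {ch : List (Fin C.numNodes × ℝ)}
    (h : C.node i = .sum ch) : C.scope i = (ch.map fun p => C.scope p.1).foldr (· ∪ ·) ∅ := by
  rw [scope_eq_scopeStep hwf, scopeStep, h]

theorem scope_prod (hwf : C.WF) {i : Fin C.numNodes} {ch : List (Fin C.numNodes)}
    (h : C.node i = .prod ch) : C.scope i = (ch.map C.scope).foldr (· ∪ ·) ∅ := by
  rw [scope_eq_scopeStep hwf, scopeStep, h]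

end PC

namespace Vtree

variable {κ : Type}

theorem isSubtreeOf_leaf_iff {s : Vtree κ} {y : κ} : s.IsSubtreeOf (.leaf y) ↔ s = .leaf y :=
  ⟨fun h => by cases h; rfl, fun h => h ▸ .refl _⟩

theorem isSubtreeOf_node_iff {s l r : Vtree κ} :
    s.IsSubtreeOf (.node l r) ↔ s = .node l r ∨ s.IsSubtreeOf l ∨ s.IsSubtreeOf r := by
  constructor
  · rintro (_ | h | h)
    exacts [Or.inl rfl, Or.inr (Or.inl h), Or.inr (Or.inr h)]
  · rintro (rfl | h | h)
    exacts [.refl _, .left h, .right h]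

theorem IsSubtreeOf.trans {a b c : Vtree κ} (hab : a.IsSubtreeOf b) (hbc : b.IsSubtreeOf c) :
    a.IsSubtreeOf c := by
  induction hbc with
  | refl => exact hab
  | left _ ih => exact .left ih
  | right _ ih => exact .right ih

theorem IsSubtreeOf.numNodesV_le {s T : Vtree κ} (h : s.IsSubtreeOf T) :
    s.numNodesV ≤ T.numNodesV := by
  induction h with
  | refl => exact le_rfl
  | left _ ih => simp only [numNodesV]; omega
  | right _ ih => simp only [numNodesV]; omega

theorem IsSubtreeOf.nodup {s T : Vtree κ} (h : s.IsSubtreeOf T) (hT : T.leavesList.Nodup) :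
    s.leavesList.Nodup := by
  induction h with
  | refl => exact hT
  | left _ ih => exact ih (List.nodup_append.1 hT).1
  | right _ ih => exact ih (List.nodup_append.1 hT).2.1

theorem mem_subtreesList {T s : Vtree κ} : s ∈ T.subtreesList ↔ s.IsSubtreeOf T := by
  induction T with
  | leaf y => simp [subtreesList, isSubtreeOf_leaf_iff]
  | node l r ihl ihr => simp [subtreesList, isSubtreeOf_node_iff, ihl, ihr]

def innerList (T : Vtree κ) : List (Vtree κ) :=
  T.subtreesList.filter fun t => t.isNodeB

theorem innerList_leaf (y : κ) : (leaf y).innerList = [] := rfl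

theorem innerList_node (l r : Vtree κ) :
    (node l r).innerList = node l r :: (l.innerList ++ r.innerList) := by
  simp [innerList, subtreesList, List.filter_append, isNodeB]

theorem isSubtreeOf_of_mem_innerList {T s : Vtree κ} (h : s ∈ T.innerList) :
    s.IsSubtreeOf T :=
  mem_subtreesList.1 (List.mem_of_mem_filter h)

variable [DecidableEq κ]

theorem mem_varsFinset {T : Vtree κ} {y : κ} : y ∈ T.varsFinset ↔ y ∈ T.leavesList := by
  induction T with
  | leaf x => simp [varsFinset, leavesList]
  | node l r ihl ihr => simp [varsFinset, leavesList, ihl, ihr]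

theorem varsFinset_nonempty (T : Vtree κ) : T.varsFinset.Nonempty := by
  induction T with
  | leaf x => simp [varsFinset]
  | node l r ihl _ => exact ihl.mono Finset.subset_union_left

theorem IsSubtreeOf.varsFinset_subset {s T : Vtree κ} (h : s.IsSubtreeOf T) :
    s.varsFinset ⊆ T.varsFinset := by
  induction h with
  | refl => exact subset_rfl
  | left _ ih => exact ih.trans Finset.subset_union_left
  | right _ ih => exact ih.trans Finset.subset_union_right

theorem disjoint_varsFinset {l r : Vtree κ} (hT : (node l r).leavesList.Nodup) :
    Disjoint l.varsFinset r.varsFinset := by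
  rw [Finset.disjoint_left]
  intro y hl hr
  exact List.disjoint_of_nodup_append hT (mem_varsFinset.1 hl) (mem_varsFinset.1 hr)

theorem disjoint_varsFinset_of_isSubtreeOf {l r a b : Vtree κ}
    (hT : (node l r).leavesList.Nodup) (ha : a.IsSubtreeOf l) (hb : b.IsSubtreeOf r) :
    Disjoint a.varsFinset b.varsFinset :=
  (disjoint_varsFinset hT).mono ha.varsFinset_subset hb.varsFinset_subset

theorem not_varsFinset_subset_of_disjoint {a b : Vtree κ}
    (h : Disjoint a.varsFinset b.varsFinset) : ¬ a.varsFinset ⊆ b.varsFinset := fun hab =>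
  (varsFinset_nonempty a).ne_empty
    ((Finset.disjoint_self_iff_empty _).1 (Finset.disjoint_of_subset_right hab h))

theorem not_isSubtreeOf_right_of_isSubtreeOf_left {l r s : Vtree κ}
    (hT : (node l r).leavesList.Nodup) (hl : s.IsSubtreeOf l) : ¬ s.IsSubtreeOf r := fun hr =>
  not_varsFinset_subset_of_disjoint (disjoint_varsFinset_of_isSubtreeOf hT hl hr) subset_rfl

theorem eq_of_varsFinset_eq {T s t : Vtree κ} (hT : T.leavesList.Nodup)
    (hs : s.IsSubtreeOf T) (ht : t.IsSubtreeOf T) (h : s.varsFinset = t.varsFinset) :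
    s = t := by
  induction T generalizing s t with
  | leaf y => rw [isSubtreeOf_leaf_iff.1 hs, isSubtreeOf_leaf_iff.1 ht]
  | node l r ihl ihr =>
    have hl : l.varsFinset ⊆ (node l r).varsFinset := Finset.subset_union_left
    have hr : r.varsFinset ⊆ (node l r).varsFinset := Finset.subset_union_right
    have hd {a b : Vtree κ} (ha : a.IsSubtreeOf l) (hb : b.IsSubtreeOf r) :=
      disjoint_varsFinset_of_isSubtreeOf hT ha hb
    rcases isSubtreeOf_node_iff.1 hs with rfl | hs | hs <;>
      rcases isSubtreeOf_node_iff.1 ht with rfl | ht | ht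
    · rfl
    · exact absurd (h ▸ hr) (not_varsFinset_subset_of_disjoint (hd ht (.refl r)).symm)
    · exact absurd (h ▸ hl) (not_varsFinset_subset_of_disjoint (hd (.refl l) ht))
    · exact absurd (h ▸ hr) (not_varsFinset_subset_of_disjoint (hd hs (.refl r)).symm)
    · exact ihl ((IsSubtreeOf.left (.refl l)).nodup hT) hs ht h
    · exact absurd h.subset (not_varsFinset_subset_of_disjoint (hd hs ht))
    · exact absurd (h ▸ hl) (not_varsFinset_subset_of_disjoint (hd (.refl l) hs))
    · exact absurd h.subset (not_varsFinset_subset_of_disjoint (hd ht hs).symm)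
    · exact ihr ((IsSubtreeOf.right (.refl r)).nodup hT) hs ht h

theorem findByVars_sound {T w : Vtree κ} {S : Finset κ} (h : T.findByVars S = some w) :
    w.IsSubtreeOf T ∧ w.varsFinset = S := by
  induction T with
  | leaf y =>
    rw [findByVars] at h
    split_ifs at h with hS
    cases h
    exact ⟨.refl _, hS.symm⟩
  | node l r ihl ihr =>
    rw [findByVars] at h
    split_ifs at h with hS
    · cases h
      exact ⟨.refl _, hS.symm⟩
    · cases hl : l.findByVars S with
      | none =>
        simp only [hl, Option.orElse] at h
        exact (ihr h).imp_left .right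
      | some v =>
        simp only [hl, Option.orElse, Option.some.injEq] at h
        subst h
        exact (ihl hl).imp_left .left

theorem isSome_findByVars {T u : Vtree κ} (hu : u.IsSubtreeOf T) :
    (T.findByVars u.varsFinset).isSome := by
  induction T with
  | leaf y => simp [isSubtreeOf_leaf_iff.1 hu, findByVars, varsFinset]
  | node l r ihl ihr =>
    rw [findByVars]
    split_ifs with hS
    · rfl
    rcases isSubtreeOf_node_iff.1 hu with rfl | h | h
    · exact absurd rfl hS
    · obtain ⟨w, hw⟩ := Option.isSome_iff_exists.1 (ihl h)
      rw [hw]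
      rfl
    · cases l.findByVars u.varsFinset
      exacts [ihr h, rfl]

theorem findByVars_varsFinset {T u : Vtree κ} (hT : T.leavesList.Nodup)
    (hu : u.IsSubtreeOf T) : T.findByVars u.varsFinset = some u := by
  obtain ⟨w, hw⟩ := Option.isSome_iff_exists.1 (isSome_findByVars hu)
  obtain ⟨hwT, hwu⟩ := findByVars_sound hw
  rwa [eq_of_varsFinset_eq hT hwT hu hwu] at hw

theorem nodup_subtreesList {T : Vtree κ} (hT : T.leavesList.Nodup) : T.subtreesList.Nodup := by
  induction T with
  | leaf y => simp [subtreesList]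
  | node l r ihl ihr =>
    have hl := (IsSubtreeOf.left (.refl l)).nodup hT
    have hr := (IsSubtreeOf.right (.refl r)).nodup hT
    refine .cons (fun hmem => ?_) (.append (ihl hl) (ihr hr) fun s hsl hsr => ?_)
    · rcases List.mem_append.1 hmem with h | h <;>
        have := (mem_subtreesList.1 h).numNodesV_le <;> simp only [numNodesV] at this <;> omega
    · exact not_isSubtreeOf_right_of_isSubtreeOf_left hT (mem_subtreesList.1 hsl)
        (mem_subtreesList.1 hsr)

theorem innerList_nodup {T : Vtree κ} (hT : T.leavesList.Nodup) : T.innerList.Nodup :=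
  (nodup_subtreesList hT).filter _

theorem eq_leaf_of_varsFinset_eq_singleton {u : Vtree κ} (hu : u.leavesList.Nodup) {v : κ}
    (h : u.varsFinset = {v}) : u = .leaf v := by
  cases u with
  | leaf y => rw [Finset.singleton_inj.1 h]
  | node l r =>
    have hcard := Finset.card_union_of_disjoint (disjoint_varsFinset hu)
    rw [show l.varsFinset ∪ r.varsFinset = {v} from h, Finset.card_singleton] at hcard
    have := (varsFinset_nonempty l).card_pos
    have := (varsFinset_nonempty r).card_pos
    omega

end Vtree

theorem Finset.sum_pi_insert {κ α β : Type*} [DecidableEq κ] [DecidableEq α] [AddCommMonoid β]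
    {t : κ → Finset α} {s : Finset κ} {a : κ} (ha : a ∉ s) (F : (∀ x ∈ insert a s, α) → β) :
    ∑ z ∈ (insert a s).pi t, F z = ∑ b ∈ t a, ∑ z ∈ s.pi t, F (Finset.Pi.cons s a b z) := by
  have hdisj : (t a : Set α).PairwiseDisjoint fun b => (s.pi t).image (Finset.Pi.cons s a b) := by
    intro b _ b' _ hbb'
    simp only [Function.onFun, Finset.disjoint_left, Finset.mem_image]
    rintro _ ⟨z, _, rfl⟩ ⟨z', _, hz'⟩
    have := congrFun₂ hz' a (Finset.mem_insert_self a s)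
    rw [Finset.Pi.cons_same, Finset.Pi.cons_same] at this
    exact hbb' this.symm
  rw [Finset.pi_insert ha, Finset.sum_biUnion hdisj]
  refine Finset.sum_congr rfl fun b _ => ?_
  rw [Finset.sum_image fun _ _ _ _ h => Finset.Pi.cons_injective ha h]

section SumUpdates

variable {κ α β : Type*} [DecidableEq κ] [CommSemiring β]

def sumUpdates (R : κ → Finset α) : List κ → (κ → α) → ((κ → α) → β) → β
  | [], w, F => F w
  | t :: L, w, F => ∑ b ∈ R t, sumUpdates R L (Function.update w t b) F

variable {R : κ → Finset α} {L L₁ L₂ : List κ} {w : κ → α} {F G : (κ → α) → β}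

theorem sumUpdates_congr (h : ∀ g, (∀ t ∉ L, g t = w t) → F g = G g) :
    sumUpdates R L w F = sumUpdates R L w G := by
  induction L generalizing w with
  | nil => exact h w fun _ _ => rfl
  | cons a L IH =>
    refine Finset.sum_congr rfl fun b _ => IH fun g hg => h g fun t ht => ?_
    rw [List.mem_cons, not_or] at ht
    rw [hg t ht.2, Function.update_of_ne ht.1]

theorem sumUpdates_mul_left (c : β) :
    sumUpdates R L w (fun f => c * F f) = c * sumUpdates R L w F := by
  induction L generalizing w with
  | nil => rfl
  | cons a L IH => simp only [sumUpdates, IH, Finset.mul_sum]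

theorem sumUpdates_zero : sumUpdates R L w (fun _ => (0 : β)) = 0 := by
  induction L generalizing w with
  | nil => rfl
  | cons a L IH => simp only [sumUpdates, IH, Finset.sum_const_zero]

theorem sumUpdates_add :
    sumUpdates R L w (fun f => F f + G f) = sumUpdates R L w F + sumUpdates R L w G := by
  induction L generalizing w with
  | nil => rfl
  | cons a L IH => simp only [sumUpdates, IH, Finset.sum_add_distrib]

theorem sumUpdates_list_sum {γ : Type*} (l : List γ) (H : γ → (κ → α) → β) :
    sumUpdates R L w (fun f => (l.map (H · f)).sum) =
      (l.map fun c => sumUpdates R L w (H c)).sum := by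
  induction l with
  | nil => exact sumUpdates_zero
  | cons c l IH => simp only [List.map_cons, List.sum_cons, sumUpdates_add, IH]

theorem sumUpdates_append :
    sumUpdates R (L₁ ++ L₂) w F = sumUpdates R L₁ w (fun w' => sumUpdates R L₂ w' F) := by
  induction L₁ generalizing w with
  | nil => rfl
  | cons a L IH => exact Finset.sum_congr rfl fun b _ => IH

theorem _root_.DependsOn.sumUpdates {S : Set κ} (hF : DependsOn F S) :
    DependsOn (fun w => sumUpdates R L w F) S := by
  induction L with
  | nil => exact hF
  | cons a L IH =>
    intro w w' h
    refine Finset.sum_congr rfl fun b _ => IH fun t ht => ?_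
    by_cases hta : t = a
    · subst hta; simp only [Function.update_self]
    · simp only [Function.update_of_ne hta, h t ht]

theorem sumUpdates_append_mul (hF : DependsOn F {t | t ∉ L₂}) (hG : DependsOn G {t | t ∉ L₁}) :
    sumUpdates R (L₁ ++ L₂) w (fun f => F f * G f) =
      sumUpdates R L₁ w F * sumUpdates R L₂ w G := by
  rw [sumUpdates_append, mul_comm, ← sumUpdates_mul_left]
  refine sumUpdates_congr fun w' hw' => ?_
  rw [sumUpdates_congr (G := fun f => F w' * G f) fun g hg => by rw [hF hg],
    sumUpdates_mul_left, mul_comm]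
  exact congrArg (· * F w') (hG.sumUpdates hw')

theorem sum_pi_eq_sumUpdates [DecidableEq α] (hL : L.Nodup) :
    ∑ z ∈ L.toFinset.pi R, F (fun t => if h : t ∈ L.toFinset then z t h else w t) =
      sumUpdates R L w F := by
  induction L generalizing w with
  | nil =>
    rw [List.toFinset_nil, Finset.pi_empty, Finset.sum_singleton]
    exact congrArg F (funext fun t => dif_neg List.not_mem_nil)
  | cons a L IH =>
    obtain ⟨haL, hL⟩ := List.nodup_cons.1 hL
    have ha : a ∉ L.toFinset := by simpa using haL
    rw [List.toFinset_cons, Finset.sum_pi_insert ha]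
    refine Finset.sum_congr rfl fun b _ => ?_
    rw [← IH hL]
    refine Finset.sum_congr rfl fun z _ => congrArg F (funext fun t => ?_)
    by_cases hta : t = a
    · subst hta
      rw [dif_pos (Finset.mem_insert_self _ _), Finset.Pi.cons_same, dif_neg ha,
        Function.update_self]
    · by_cases ht : t ∈ L.toFinset
      · rw [dif_pos (Finset.mem_insert_of_mem ht), Finset.Pi.cons_ne (Ne.symm hta), dif_pos ht]
      · rw [dif_neg (by simp [hta, List.mem_toFinset.not.1 ht]), dif_neg ht,
          Function.update_of_ne hta]

end SumUpdates

theorem List.foldr_union_eq_of_forall_eq {ι : Type} [DecidableEq ι] {l : List (Finset ι)}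
    {s : Finset ι} (h : ∀ a ∈ l, a = s) (hl : l ≠ []) : l.foldr (· ∪ ·) ∅ = s := by
  induction l with
  | nil => exact absurd rfl hl
  | cons a l IH =>
    rw [List.foldr_cons, h a List.mem_cons_self]
    rcases l with _ | ⟨b, l⟩
    · exact Finset.union_empty s
    · rw [IH (fun c hc => h c (List.mem_cons_of_mem _ hc)) (List.cons_ne_nil _ _),
        Finset.union_self]

def latentAssign {ι : Type} {Val : ι → Type} (x : ∀ i, Val i) (f : Vtree ι → ℕ) :
    ∀ s : ι ⊕ Vtree ι, augVal Val s
  | .inl i => x i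
  | .inr t => f t

@[simp]
theorem latentAssign_inr {ι : Type} {Val : ι → Type} (x : ∀ i, Val i) (f : Vtree ι → ℕ)
    (t : Vtree ι) : latentAssign x f (.inr t) = f t := rfl

namespace PC

variable {ι : Type} {Val : ι → Type} [DecidableEq ι] {C : PC ι Val} {V : Vtree ι}

theorem Smooth.scope_sum_child (hsm : C.Smooth) (hwf : C.WF) {i : Fin C.numNodes}
    {ch : List (Fin C.numNodes × ℝ)} (h : C.node i = .sum ch) {p : Fin C.numNodes × ℝ}
    (hp : p ∈ ch) : C.scope p.1 = C.scope i := by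
  rw [scope_sum hwf h]
  refine (List.foldr_union_eq_of_forall_eq (fun a ha => ?_) ?_).symm
  · obtain ⟨q, hq, rfl⟩ := List.mem_map.1 ha
    exact hsm i ch h q hq p hp
  · exact List.ne_nil_of_mem (List.mem_map_of_mem hp)

theorem StructuredBy.exists_split (hstr : C.StructuredBy V) (hwf : C.WF)
    (hV : V.leavesList.Nodup) {i : Fin C.numNodes} {ch : List (Fin C.numNodes)}
    (h : C.node i = .prod ch) {u : Vtree ι} (hu : u.IsSubtreeOf V)
    (hsc : C.scope i = u.varsFinset) :
    ∃ c₁ c₂ l r, ch = [c₁, c₂] ∧ u = .node l r ∧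
      C.scope c₁ = l.varsFinset ∧ C.scope c₂ = r.varsFinset := by
  obtain ⟨c₁, c₂, l, r, rfl, hlr, hs₁, hs₂⟩ := hstr i ch h
  refine ⟨c₁, c₂, l, r, rfl, Vtree.eq_of_varsFinset_eq hV hu hlr ?_, hs₁, hs₂⟩
  rw [← hsc, scope_prod hwf h]
  simp [Vtree.varsFinset, hs₁, hs₂]

theorem idxOf_lt_prodCount {i : Fin C.numNodes} (h : (C.node i).isProdB = true) :
    C.idxOf i < C.prodCount (C.scope i) := by
  refine Finset.card_lt_card ⟨fun j hj => ?_, fun hsub => ?_⟩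
  · simp only [Finset.mem_filter, Finset.mem_univ, true_and] at hj ⊢
    exact hj.2
  · have := hsub (Finset.mem_filter.2 ⟨Finset.mem_univ i, h, rfl⟩)
    simp at this

def augCopy (i : Fin C.numNodes) : Fin (C.augment V).numNodes :=
  ⟨2 * i + 1, by have := i.isLt; show 2 * (i : ℕ) + 1 < 2 * C.numNodes; omega⟩

def augIndicator (i : Fin C.numNodes) : Fin (C.augment V).numNodes :=
  ⟨2 * i, by have := i.isLt; show 2 * (i : ℕ) < 2 * C.numNodes; omega⟩

theorem augment_node_augCopy (i : Fin C.numNodes) :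
    (C.augment V).node (augCopy i) =
      match C.node i with
      | .leaf v f => .leaf (.inl v) f
      | .sum ch => .sum (ch.map fun p => (augCopy p.1, p.2))
      | .prod ch => .prod (ch.map augCopy ++ [augIndicator i]) := by
  simp only [augment, augCopy, augIndicator]
  rw [dif_pos (by omega : (2 * (i : ℕ) + 1) % 2 = 1)]
  simp only [show (2 * (i : ℕ) + 1) / 2 = i by omega, Fin.eta]
  rfl

theorem augment_node_augIndicator (i : Fin C.numNodes) :
    (C.augment V).node (augIndicator i) =
      match C.node i with
      | .prod _ => .leaf (.inr ((V.findByVars (C.scope i)).getD V))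
          (fun m => if m = C.idxOf i then 1 else 0)
      | _ => .leaf (.inr V) (fun _ => 1) := by
  simp only [augment, augIndicator]
  rw [dif_neg (by omega : ¬ (2 * (i : ℕ)) % 2 = 1)]
  have hi : (⟨2 * (i : ℕ) / 2, by omega⟩ : Fin C.numNodes) = i := Fin.ext (by simp)
  rw [hi]

theorem augment_wf (hwf : C.WF) : (C.augment V).WF := by
  intro k j hj
  have hk : (k : ℕ) < 2 * C.numNodes := k.isLt
  set i : Fin C.numNodes := ⟨k / 2, by omega⟩
  rcases Nat.mod_two_eq_zero_or_one k with hpar | hpar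
  · rw [show k = augIndicator i from Fin.ext (by simp [augIndicator, i]; omega),
      augment_node_augIndicator] at hj
    split at hj <;> simp [PCNode.children] at hj
  · have hki : (k : ℕ) = 2 * i + 1 := by simp [i]; omega
    rw [show k = augCopy i from Fin.ext hki, augment_node_augCopy] at hj
    split at hj
    · simp [PCNode.children] at hj
    · next ch hi =>
      simp only [PCNode.children, List.map_map, List.mem_map] at hj
      obtain ⟨p, hp, rfl⟩ := hj
      have := Fin.lt_def.1 (hwf.sum_child_lt hi hp)
      show 2 * (p.1 : ℕ) + 1 < k
      omega
    · next ch hi =>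
      simp only [PCNode.children, List.mem_append, List.mem_map, List.mem_singleton] at hj
      rcases hj with ⟨c, hc, rfl⟩ | rfl
      · have := Fin.lt_def.1 (hwf.prod_child_lt hi hc)
        show 2 * (c : ℕ) + 1 < k
        omega
      · show 2 * (i : ℕ) < k
        omega

theorem nodeEval_augCopy_leaf (hwf : C.WF) (y : ∀ s, augVal Val s) {i : Fin C.numNodes}
    {v : ι} {f : Val v → ℝ} (h : C.node i = .leaf v f) :
    (C.augment V).nodeEval y (augCopy i) = f (y (.inl v)) :=
  nodeEval_leaf (augment_wf hwf) y (by rw [augment_node_augCopy, h])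

theorem nodeEval_augCopy_sum (hwf : C.WF) (y : ∀ s, augVal Val s) {i : Fin C.numNodes}
    {ch : List (Fin C.numNodes × ℝ)} (h : C.node i = .sum ch) :
    (C.augment V).nodeEval y (augCopy i) =
      (ch.map fun p => p.2 * (C.augment V).nodeEval y (augCopy p.1)).sum := by
  rw [nodeEval_sum (augment_wf hwf) y (by rw [augment_node_augCopy, h]), List.map_map]
  rfl

theorem nodeEval_augCopy_prod (hwf : C.WF) (hV : V.leavesList.Nodup) (y : ∀ s, augVal Val s)
    {i c₁ c₂ : Fin C.numNodes} (h : C.node i = .prod [c₁, c₂]) {l r : Vtree ι}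
    (hu : (Vtree.node l r).IsSubtreeOf V) (hsc : C.scope i = (Vtree.node l r).varsFinset) :
    (C.augment V).nodeEval y (augCopy i) =
      (C.augment V).nodeEval y (augCopy c₁) * (C.augment V).nodeEval y (augCopy c₂) *
        if y (.inr (.node l r)) = C.idxOf i then 1 else 0 := by
  have hind : (C.augment V).node (augIndicator i) =
      .leaf (.inr (.node l r)) fun m => if m = C.idxOf i then 1 else 0 := by
    rw [augment_node_augIndicator, h, hsc, Vtree.findByVars_varsFinset hV hu]
    rfl
  rw [nodeEval_prod (augment_wf hwf) y (by rw [augment_node_augCopy, h])]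
  simp [nodeEval_leaf (augment_wf hwf) y hind]

theorem dependsOn_nodeEval_augCopy (hwf : C.WF) (hsm : C.Smooth) (hstr : C.StructuredBy V)
    (hV : V.leavesList.Nodup) (x : ∀ i, Val i) (i : Fin C.numNodes) {u : Vtree ι}
    (hu : u.IsSubtreeOf V) (hsc : C.scope i = u.varsFinset) :
    DependsOn (fun f => (C.augment V).nodeEval (latentAssign x f) (augCopy i))
      {t | t.IsSubtreeOf u} := by
  induction i using WellFoundedLT.induction generalizing u with
  | _ i IH =>
  intro f g hfg
  dsimp only
  cases hi : C.node i with
  | leaf v φ => rw [nodeEval_augCopy_leaf hwf _ hi, nodeEval_augCopy_leaf hwf _ hi]; rfl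
  | sum ch =>
    rw [nodeEval_augCopy_sum hwf _ hi, nodeEval_augCopy_sum hwf _ hi]
    refine congrArg List.sum (List.map_congr_left fun p hp => congrArg (p.2 * ·) ?_)
    exact IH p.1 (hwf.sum_child_lt hi hp) hu ((hsm.scope_sum_child hwf hi hp).trans hsc) hfg
  | prod ch =>
    obtain ⟨c₁, c₂, l, r, rfl, rfl, hs₁, hs₂⟩ := hstr.exists_split hwf hV hi hu hsc
    rw [nodeEval_augCopy_prod hwf hV _ hi hu hsc, nodeEval_augCopy_prod hwf hV _ hi hu hsc,
      latentAssign_inr, latentAssign_inr, hfg _ (.refl _)]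
    congr 2
    · exact IH c₁ (hwf.prod_child_lt hi (by simp))
        ((Vtree.IsSubtreeOf.left (.refl l)).trans hu) hs₁ fun t ht => hfg t (.left ht)
    · exact IH c₂ (hwf.prod_child_lt hi (by simp))
        ((Vtree.IsSubtreeOf.right (.refl r)).trans hu) hs₂ fun t ht => hfg t (.right ht)

abbrev latentRange (C : PC ι Val) (t : Vtree ι) : Finset ℕ :=
  Finset.range (C.prodCount t.varsFinset)

theorem sumUpdates_nodeEval_augCopy_prod (hwf : C.WF) (hsm : C.Smooth)
    (hstr : C.StructuredBy V) (hV : V.leavesList.Nodup) (x : ∀ i, Val i)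
    {i c₁ c₂ : Fin C.numNodes} (hi : C.node i = .prod [c₁, c₂]) {l r : Vtree ι}
    (hu : (Vtree.node l r).IsSubtreeOf V) (hsc : C.scope i = (Vtree.node l r).varsFinset)
    (hs₁ : C.scope c₁ = l.varsFinset) (hs₂ : C.scope c₂ = r.varsFinset)
    (h₁ : ∀ w, sumUpdates C.latentRange l.innerList w
      (fun f => (C.augment V).nodeEval (latentAssign x f) (augCopy c₁)) = C.nodeEval x c₁)
    (h₂ : ∀ w, sumUpdates C.latentRange r.innerList w
      (fun f => (C.augment V).nodeEval (latentAssign x f) (augCopy c₂)) = C.nodeEval x c₂)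
    (w : Vtree ι → ℕ) :
    sumUpdates C.latentRange (Vtree.node l r).innerList w
      (fun f => (C.augment V).nodeEval (latentAssign x f) (augCopy i)) = C.nodeEval x i := by
  have hlr := hu.nodup hV
  have hlV : l.IsSubtreeOf V := (Vtree.IsSubtreeOf.left (.refl l)).trans hu
  have hrV : r.IsSubtreeOf V := (Vtree.IsSubtreeOf.right (.refl r)).trans hu
  have hfresh : Vtree.node l r ∉ l.innerList ++ r.innerList :=
    (List.nodup_cons.1 (Vtree.innerList_node l r ▸ Vtree.innerList_nodup hlr)).1
  have hstep : ∀ b, sumUpdates C.latentRange (l.innerList ++ r.innerList)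
      (Function.update w (.node l r) b)
      (fun f => (C.augment V).nodeEval (latentAssign x f) (augCopy i)) =
      (if b = C.idxOf i then 1 else 0) * (C.nodeEval x c₁ * C.nodeEval x c₂) := by
    intro b
    rw [sumUpdates_congr (G := fun f => (if b = C.idxOf i then 1 else 0) *
        ((C.augment V).nodeEval (latentAssign x f) (augCopy c₁) *
          (C.augment V).nodeEval (latentAssign x f) (augCopy c₂))), sumUpdates_mul_left,
      sumUpdates_append_mul, h₁, h₂]
    · refine (dependsOn_nodeEval_augCopy hwf hsm hstr hV x c₁ hlV hs₁).mono fun t ht htr => ?_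
      exact Vtree.not_isSubtreeOf_right_of_isSubtreeOf_left hlr ht
        (Vtree.isSubtreeOf_of_mem_innerList htr)
    · refine (dependsOn_nodeEval_augCopy hwf hsm hstr hV x c₂ hrV hs₂).mono fun t ht htl => ?_
      exact Vtree.not_isSubtreeOf_right_of_isSubtreeOf_left hlr
        (Vtree.isSubtreeOf_of_mem_innerList htl) ht
    · intro g hg
      rw [nodeEval_augCopy_prod hwf hV _ hi hu hsc, latentAssign_inr, hg _ hfresh,
        Function.update_self]
      ring
  have hidx : C.idxOf i ∈ C.latentRange (.node l r) :=
    Finset.mem_range.2 (hsc ▸ idxOf_lt_prodCount (by rw [hi]; rfl))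
  rw [Vtree.innerList_node, sumUpdates, Finset.sum_congr rfl fun b _ => hstep b]
  simp only [ite_mul, one_mul, zero_mul]
  rw [Finset.sum_ite_eq', if_pos hidx, nodeEval_prod hwf x hi]
  simp

theorem sumUpdates_nodeEval_augCopy (hwf : C.WF) (hsm : C.Smooth) (hstr : C.StructuredBy V)
    (hV : V.leavesList.Nodup) (x : ∀ i, Val i) (i : Fin C.numNodes) {u : Vtree ι}
    (hu : u.IsSubtreeOf V) (hsc : C.scope i = u.varsFinset) (w : Vtree ι → ℕ) :
    sumUpdates C.latentRange u.innerList w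
      (fun f => (C.augment V).nodeEval (latentAssign x f) (augCopy i)) = C.nodeEval x i := by
  induction i using WellFoundedLT.induction generalizing u w with
  | _ i IH =>
  cases hi : C.node i with
  | leaf v φ =>
    obtain rfl : u = .leaf v := Vtree.eq_leaf_of_varsFinset_eq_singleton (hu.nodup hV)
      (hsc.symm.trans (scope_leaf hwf hi))
    rw [Vtree.innerList_leaf, sumUpdates, nodeEval_augCopy_leaf hwf _ hi, nodeEval_leaf hwf x hi]
    rfl
  | sum ch =>
    simp only [nodeEval_augCopy_sum hwf _ hi]
    rw [sumUpdates_list_sum ch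
      fun p f => p.2 * (C.augment V).nodeEval (latentAssign x f) (augCopy p.1),
      nodeEval_sum hwf x hi]
    refine congrArg List.sum (List.map_congr_left fun p hp => ?_)
    rw [sumUpdates_mul_left,
      IH p.1 (hwf.sum_child_lt hi hp) hu ((hsm.scope_sum_child hwf hi hp).trans hsc)]
  | prod ch =>
    obtain ⟨c₁, c₂, l, r, rfl, rfl, hs₁, hs₂⟩ := hstr.exists_split hwf hV hi hu hsc
    exact sumUpdates_nodeEval_augCopy_prod hwf hsm hstr hV x hi hu hsc hs₁ hs₂
      (IH c₁ (hwf.prod_child_lt hi (by simp)) ((Vtree.IsSubtreeOf.left (.refl l)).trans hu) hs₁)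
      (IH c₂ (hwf.prod_child_lt hi (by simp)) ((Vtree.IsSubtreeOf.right (.refl r)).trans hu) hs₂)
      w

end PC

theorem statement0_general {n : ℕ} (Val : Fin n → Type) [∀ i, Fintype (Val i)]
    (C : PC (Fin n) Val) (V : Vtree (Fin n)) (hV : V.ValidOver Set.univ)
    (hpc : C.IsPCOver) (hsm : C.Smooth) (hstr : C.StructuredBy V)
    (x : ∀ i, Val i) :
    C.eval x =
      ∑ z ∈ V.innerFinset.pi (fun t => Finset.range (C.prodCount t.varsFinset)),
        (C.augment V).eval (augAssign V x z) := by
  obtain ⟨hwf, -, -, -, -, hroot⟩ := hpc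
  have hvars : V.varsFinset = Finset.univ :=
    Finset.eq_univ_of_forall fun y => Vtree.mem_varsFinset.2 ((hV.2 y).2 trivial)
  have hN : 0 < C.numNodes := by
    by_contra hN
    rw [PC.rootScope, dif_neg hN, ← hvars] at hroot
    exact V.varsFinset_nonempty.ne_empty hroot.symm
  have hscope : C.scope ⟨C.numNodes - 1, by omega⟩ = V.varsFinset := by
    rw [hvars, ← hroot, PC.rootScope, dif_pos hN]
  have hroot_aug : (⟨(C.augment V).numNodes - 1, by simp [PC.augment]; omega⟩ :
      Fin (C.augment V).numNodes) = PC.augCopy ⟨C.numNodes - 1, by omega⟩ :=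
    Fin.ext (show 2 * C.numNodes - 1 = 2 * (C.numNodes - 1) + 1 by omega)
  rw [PC.eval, dif_pos hN, ← PC.sumUpdates_nodeEval_augCopy hwf hsm hstr hV.1 x _ (.refl V)
    hscope 0, ← sum_pi_eq_sumUpdates (Vtree.innerList_nodup hV.1)]
  refine Finset.sum_congr rfl fun z _ => ?_
  rw [PC.eval, dif_pos (by simp [PC.augment]; omega), hroot_aug]
  rfl

/-- Let `A` be a smooth and structured-decomposable probabilistic circuit
over variables `X` respecting a vtree `V`, and let `A_aug` be its augmented PC over
`X ∪ Z`, where `Z = {Z_v : v an inner node of V}`.  Then for every assignment `x` of `X`,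
`p_A(x) = Σ_z p_{A_aug}(x, z)`, where the sum ranges over all joint assignments `z` of the
latent variables `Z` (the latent `Z_v` ranging over `{0, …, |prod(v)| − 1}`). -/
theorem statement0 {n : ℕ} (Val : Fin n → Type) [∀ i, Fintype (Val i)]
    (C : PC (Fin n) Val) (V : Vtree (Fin n)) (hV : V.ValidOver Set.univ)
    (hpc : C.IsPCOver) (hsm : C.Smooth) (hdec : C.Decomposable) (hstr : C.StructuredBy V)
    (x : ∀ i, Val i) :
    C.eval x =
      ∑ z ∈ V.innerFinset.pi (fun t => Finset.range (C.prodCount t.varsFinset)),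
        (C.augment V).eval (augAssign V x z) :=
  statement0_general Val C V hV hpc hsm hstr x
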